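/- Let X be a normed space, C ⊆ X a nonempty convex subset, T : C → C nonexpansive, Φ : C → C a ρ-contraction, and {α_n}_{n≥0} a sequence in (0,1) such that lim α_n = 0 with rate of convergence φ, ∑ α_n diverges with rate of divergence θ, and ∑ |α_{n+1} − α_n| converges with Cauchy modulus β. Let x_0 ∈ C and x_{n+1} = T(α_n Φ(x_n) + (1 − α_n)x_n), and assume {x_n} is bounded, with M ≥ ‖Φ(x_0) − x_0‖ and D > 0 such that ‖x_n − x_m‖ ≤ D for all m, n. Then lim_{n→∞} ‖x_n − Tx_n‖ = 0 and, moreover, for all ε ∈ (0,2), ‖x_n − Tx_n‖ < ε for all n ≥ Ψ, where Ψ = max{ 1 + θ(⌈1/(1 − ρ)⌉ · (β(ε/(4P)) + 2 + ⌈ln(4D/ε)⌉)), 1 + φ(ε/(2P)) } and P = (1 + ρ)D + M. -/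

import Mathlib

/-!
Set `y n = α n • Φ (x n) + (1 - α n) • x n`, so that `x (n + 1) = T (y n)`. Nonexpansiveness of
`T` and the `ρ`-contractivity of `Φ` give the recursive inequality
`‖x (n+2) - x (n+1)‖ ≤ (1 - (1 - ρ) α (n+1)) ‖x (n+1) - x n‖ + |α (n+1) - α n| P`,
with `P = (1 + ρ) D + M` bounding `‖Φ (x n) - x n‖`. Unrolling it from `β (ε / 4P) + 1` on, the
product `∏ (1 - (1 - ρ) α i) ≤ exp (-(1 - ρ) ∑ α i)` is made small by the rate of divergence `θ`
and the tail `∑ |α (i+1) - α i|` by the Cauchy modulus `β`, so `‖x (n+1) - x n‖ < ε / 2`.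
Finally `‖x n - T (x n)‖ ≤ ‖x (n+1) - x n‖ + α n P`, and `α n P < ε / 2` by the rate `φ`.
-/

open Filter Finset

section RealSequences

variable {α : ℕ → ℝ}

theorem sum_range_le_of_le_one (hα : ∀ i, α i ≤ 1) (n : ℕ) : ∑ i ∈ range n, α i ≤ n := by
  simpa using sum_le_sum fun i (_ : i ∈ range n) => hα i

theorem sub_le_sum_Ico_of_le_sum_range (hα0 : ∀ i, 0 ≤ α i) (hα1 : ∀ i, α i ≤ 1)
    {K : ℝ} {t p n : ℕ} (hK : K ≤ ∑ i ∈ range t, α i) (ht : t ≤ n) (hp : p ≤ n) :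
    K - p ≤ ∑ i ∈ Ico p n, α i := by
  have hmono : ∑ i ∈ range t, α i ≤ ∑ i ∈ range n, α i :=
    sum_le_sum_of_subset_of_nonneg (range_subset_range.mpr ht) fun i _ _ => hα0 i
  rw [← sum_range_add_sum_Ico α hp] at hmono
  linarith [sum_range_le_of_le_one hα1 p]

theorem prod_one_sub_le_exp_neg_sum {ι : Type*} (s : Finset ι) {a : ι → ℝ}
    (ha : ∀ i ∈ s, a i ≤ 1) : ∏ i ∈ s, (1 - a i) ≤ Real.exp (-∑ i ∈ s, a i) := by
  rw [← sum_neg_distrib, Real.exp_sum]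
  exact prod_le_prod (fun i hi => sub_nonneg.2 (ha i hi)) fun i _ => Real.one_sub_le_exp_neg _

theorem mul_prod_one_sub_le_of_log_le {ι : Type*} {s : Finset ι} {a : ι → ℝ} {D e : ℝ}
    (hD : 0 < D) (he : 0 < e) (ha : ∀ i ∈ s, a i ≤ 1) (hlog : Real.log (D / e) ≤ ∑ i ∈ s, a i) :
    D * ∏ i ∈ s, (1 - a i) ≤ e := by
  calc D * ∏ i ∈ s, (1 - a i) ≤ D * Real.exp (-∑ i ∈ s, a i) := by
        gcongr; exact prod_one_sub_le_exp_neg_sum s ha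
    _ ≤ D * Real.exp (-Real.log (D / e)) := by gcongr
    _ = e := by rw [Real.exp_neg, Real.exp_log (by positivity)]; field_simp

theorem sum_Ico_lt_of_cauchy_modulus {c : ℕ → ℝ} {b n : ℕ} {ε : ℝ}
    (hb : ∀ k, |∑ i ∈ range (b + k + 1), c i - ∑ i ∈ range (b + 1), c i| < ε) (hn : b + 1 ≤ n) :
    ∑ i ∈ Ico (b + 1) n, c i < ε := by
  obtain ⟨k, rfl⟩ : ∃ k, n = b + k + 1 := ⟨n - (b + 1), by omega⟩
  rw [sum_Ico_eq_sub _ (by omega)]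
  exact (le_abs_self _).trans_lt (hb k)

theorem le_mul_prod_add_sum_Ico_of_le_one_sub_mul_add {s a b : ℕ → ℝ} (ha0 : ∀ n, 0 ≤ a n)
    (ha1 : ∀ n, a n ≤ 1) (hb : ∀ n, 0 ≤ b n) (hs : ∀ n, s (n + 1) ≤ (1 - a n) * s n + b n)
    {m n : ℕ} (hmn : m ≤ n) :
    s n ≤ s m * ∏ i ∈ Ico m n, (1 - a i) + ∑ i ∈ Ico m n, b i := by
  induction n, hmn using Nat.le_induction with
  | base => simp
  | succ n hmn ih =>
    rw [prod_Ico_succ_top hmn, sum_Ico_succ_top hmn]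
    have hB : 0 ≤ ∑ i ∈ Ico m n, b i := sum_nonneg fun i _ => hb i
    calc s (n + 1) ≤ (1 - a n) * s n + b n := hs n
      _ ≤ (1 - a n) * (s m * ∏ i ∈ Ico m n, (1 - a i) + ∑ i ∈ Ico m n, b i) + b n := by
        gcongr; linarith [ha1 n]
      _ ≤ _ := by nlinarith [mul_nonneg (ha0 n) hB]

theorem lt_half_of_le_one_sub_mul_add_of_rates {s : ℕ → ℝ} {ρ D P e : ℝ} {θ : ℕ → ℕ}
    {β : ℝ → ℕ} (hρ0 : 0 ≤ ρ) (hρ1 : ρ < 1) (hα0 : ∀ n, 0 ≤ α n) (hα1 : ∀ n, α n ≤ 1)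
    (hθ : ∀ n : ℕ, (n : ℝ) ≤ ∑ i ∈ range (θ n + 1), α i)
    (hβ : ∀ e : ℝ, 0 < e → ∀ n : ℕ,
      abs ((∑ i ∈ range (β e + n + 1), |α (i + 1) - α i|) -
          ∑ i ∈ range (β e + 1), |α (i + 1) - α i|) < e)
    (hD : 0 < D) (hP : 0 < P) (he : 0 < e) (hsD : ∀ n, s n ≤ D)
    (hs : ∀ n, s (n + 1) ≤ (1 - (1 - ρ) * α (n + 1)) * s n + |α (n + 1) - α n| * P) {n : ℕ}
    (hn : 1 + θ (⌈1 / (1 - ρ)⌉₊ * (β (e / (4 * P)) + 2 + ⌈Real.log (4 * D / e)⌉₊)) ≤ n) :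
    s n < e / 2 := by
  set m := β (e / (4 * P))
  set L := ⌈Real.log (4 * D / e)⌉₊
  set K := ⌈1 / (1 - ρ)⌉₊ * (m + 2 + L)
  have hK : (m : ℝ) + 2 + L ≤ (1 - ρ) * K := by
    have hN := Nat.le_ceil (1 / (1 - ρ))
    rw [div_le_iff₀ (sub_pos.2 hρ1)] at hN
    simp only [K, Nat.cast_mul, Nat.cast_add, Nat.cast_ofNat]
    nlinarith [(by positivity : (0 : ℝ) ≤ m + 2 + L)]
  have hθK : K ≤ θ K + 1 := by
    exact_mod_cast (hθ K).trans (sum_range_le_of_le_one hα1 _)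
  have hmn : m + 1 ≤ n := by
    have : (m : ℝ) + 2 ≤ K := by nlinarith [K.cast_nonneg (α := ℝ), L.cast_nonneg (α := ℝ)]
    have : m + 2 ≤ K := by exact_mod_cast this
    omega
  have hunroll := le_mul_prod_add_sum_Ico_of_le_one_sub_mul_add
    (a := fun i => (1 - ρ) * α (i + 1)) (b := fun i => |α (i + 1) - α i| * P)
    (fun i => mul_nonneg (by linarith) (hα0 _))
    (fun i => by nlinarith [hα0 (i + 1), hα1 (i + 1)])
    (fun i => mul_nonneg (abs_nonneg _) hP.le) hs hmn
  have hprod : D * ∏ i ∈ Ico (m + 1) n, (1 - (1 - ρ) * α (i + 1)) ≤ e / 4 := by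
    refine mul_prod_one_sub_le_of_log_le hD (by positivity)
      (fun i _ => by nlinarith [hα0 (i + 1), hα1 (i + 1)]) ?_
    have hsum : (K : ℝ) - (m + 2) ≤ ∑ i ∈ Ico (m + 1) n, α (i + 1) := by
      rw [sum_Ico_add']
      exact_mod_cast sub_le_sum_Ico_of_le_sum_range hα0 hα1 (hθ K) (by omega) (by omega)
    rw [← mul_sum, div_div_eq_mul_div, mul_comm D]
    nlinarith [Nat.le_ceil (Real.log (4 * D / e)),
      mul_le_mul_of_nonneg_left hsum (sub_nonneg.2 hρ1.le)]
  have htail : ∑ i ∈ Ico (m + 1) n, |α (i + 1) - α i| * P < e / 4 := by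
    rw [← sum_mul, ← lt_div_iff₀ hP, div_div]
    exact sum_Ico_lt_of_cauchy_modulus (hβ _ (by positivity)) hmn
  have hprod0 : 0 ≤ ∏ i ∈ Ico (m + 1) n, (1 - (1 - ρ) * α (i + 1)) :=
    prod_nonneg fun i _ => by nlinarith [hα0 (i + 1), hα1 (i + 1)]
  calc s n ≤ s (m + 1) * ∏ i ∈ Ico (m + 1) n, (1 - (1 - ρ) * α (i + 1))
        + ∑ i ∈ Ico (m + 1) n, |α (i + 1) - α i| * P := hunroll
    _ ≤ D * ∏ i ∈ Ico (m + 1) n, (1 - (1 - ρ) * α (i + 1))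
        + ∑ i ∈ Ico (m + 1) n, |α (i + 1) - α i| * P := by gcongr; exact hsD _
    _ < e / 4 + e / 4 := add_lt_add_of_le_of_lt hprod htail
    _ = e / 2 := by ring

end RealSequences

theorem tendsto_nhds_zero_of_forall_lt {u : ℕ → ℝ} (hu : ∀ n, 0 ≤ u n) {r : ℝ} (hr : 0 < r)
    (h : ∀ e ∈ Set.Ioo 0 r, ∃ N, ∀ n ≥ N, u n < e) : Tendsto u atTop (nhds 0) := by
  rw [Metric.tendsto_atTop]
  intro ε hε
  obtain ⟨N, hN⟩ := h (min ε (r / 2))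
    ⟨lt_min hε (half_pos hr), (min_le_right _ _).trans_lt (half_lt_self hr)⟩
  refine ⟨N, fun n hn => ?_⟩
  rw [Real.dist_0_eq_abs, abs_of_nonneg (hu n)]
  exact (hN n hn).trans_le (min_le_left _ _)

section NormedSpace

variable {X : Type*} [SeminormedAddCommGroup X]

theorem norm_sub_self_le_of_norm_sub_le {u v p q : X} {ρ : ℝ} (hpq : ‖p - q‖ ≤ ρ * ‖u - v‖) :
    ‖p - u‖ ≤ (1 + ρ) * ‖u - v‖ + ‖q - v‖ := by
  calc ‖p - u‖ = ‖(p - q) + (q - v) + (v - u)‖ := by congr 1; abel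
    _ ≤ ‖p - q‖ + ‖q - v‖ + ‖v - u‖ := norm_add₃_le
    _ ≤ (1 + ρ) * ‖u - v‖ + ‖q - v‖ := by rw [norm_sub_rev v u]; linarith

variable [NormedSpace ℝ X]

theorem norm_combo_sub_self {u p : X} {a : ℝ} (ha : 0 ≤ a) :
    ‖(a • p + (1 - a) • u) - u‖ = a * ‖p - u‖ := by
  rw [show (a • p + (1 - a) • u) - u = a • (p - u) by module, norm_smul, Real.norm_of_nonneg ha]

theorem norm_combo_sub_combo_le {u v p q : X} {ρ a b : ℝ} (hpq : ‖p - q‖ ≤ ρ * ‖u - v‖)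
    (ha : a ∈ Set.Icc (0 : ℝ) 1) :
    ‖(a • p + (1 - a) • u) - (b • q + (1 - b) • v)‖ ≤
      (1 - (1 - ρ) * a) * ‖u - v‖ + |a - b| * ‖q - v‖ := by
  have hsplit : (a • p + (1 - a) • u) - (b • q + (1 - b) • v) =
      a • (p - q) + (1 - a) • (u - v) + (a - b) • (q - v) := by module
  rw [hsplit]
  refine norm_add₃_le.trans ?_
  rw [norm_smul, norm_smul, norm_smul, Real.norm_of_nonneg ha.1,
    Real.norm_of_nonneg (sub_nonneg.2 ha.2), Real.norm_eq_abs]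
  nlinarith [mul_le_mul_of_nonneg_left hpq ha.1]

variable {C : Set X} {T Φ : X → X}

theorem combo_mem (hconv : Convex ℝ C) (hΦ : ∀ x ∈ C, Φ x ∈ C) {u : X} (hu : u ∈ C) {a : ℝ}
    (ha : a ∈ Set.Icc (0 : ℝ) 1) : a • Φ u + (1 - a) • u ∈ C :=
  hconv (hΦ u hu) hu ha.1 (sub_nonneg.2 ha.2) (add_sub_cancel _ _)

theorem norm_map_combo_sub_map_combo_le (hconv : Convex ℝ C) (hΦ : ∀ x ∈ C, Φ x ∈ C)
    (hTne : ∀ x ∈ C, ∀ y ∈ C, ‖T x - T y‖ ≤ ‖x - y‖) {ρ : ℝ}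
    (hΦc : ∀ x ∈ C, ∀ y ∈ C, ‖Φ x - Φ y‖ ≤ ρ * ‖x - y‖) {u v : X} (hu : u ∈ C) (hv : v ∈ C)
    {a b : ℝ} (ha : a ∈ Set.Icc (0 : ℝ) 1) (hb : b ∈ Set.Icc (0 : ℝ) 1) :
    ‖T (a • Φ u + (1 - a) • u) - T (b • Φ v + (1 - b) • v)‖ ≤
      (1 - (1 - ρ) * a) * ‖u - v‖ + |a - b| * ‖Φ v - v‖ :=
  (hTne _ (combo_mem hconv hΦ hu ha) _ (combo_mem hconv hΦ hv hb)).trans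
    (norm_combo_sub_combo_le (hΦc u hu v hv) ha)

theorem norm_map_combo_sub_map_le (hconv : Convex ℝ C) (hΦ : ∀ x ∈ C, Φ x ∈ C)
    (hTne : ∀ x ∈ C, ∀ y ∈ C, ‖T x - T y‖ ≤ ‖x - y‖) {u : X} (hu : u ∈ C) {a : ℝ}
    (ha : a ∈ Set.Icc (0 : ℝ) 1) : ‖T (a • Φ u + (1 - a) • u) - T u‖ ≤ a * ‖Φ u - u‖ :=
  (hTne _ (combo_mem hconv hΦ hu ha) u hu).trans_eq (norm_combo_sub_self ha.1)

end NormedSpace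

theorem stmt_12_general
    {X : Type*} [NormedAddCommGroup X] [NormedSpace ℝ X]
    (C : Set X) (hconv : Convex ℝ C)
    (T Φ : X → X) (hΦ : ∀ x ∈ C, Φ x ∈ C)
    (hTne : ∀ x ∈ C, ∀ y ∈ C, ‖T x - T y‖ ≤ ‖x - y‖)
    (ρ : ℝ) (hρ : ρ ∈ Set.Ioo (0 : ℝ) 1)
    (hΦc : ∀ x ∈ C, ∀ y ∈ C, ‖Φ x - Φ y‖ ≤ ρ * ‖x - y‖)
    (α : ℕ → ℝ) (hα : ∀ n, α n ∈ Set.Ioo (0 : ℝ) 1)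
    (φ : ℝ → ℕ) (hφ : ∀ e : ℝ, 0 < e → ∀ n ≥ φ e, |α n| < e)
    (θ : ℕ → ℕ) (hθ : ∀ n : ℕ, (n : ℝ) ≤ ∑ i ∈ Finset.range (θ n + 1), α i)
    (β : ℝ → ℕ)
    (hβ : ∀ e : ℝ, 0 < e → ∀ n : ℕ,
      abs ((∑ i ∈ Finset.range (β e + n + 1), |α (i + 1) - α i|) -
          ∑ i ∈ Finset.range (β e + 1), |α (i + 1) - α i|) < e)
    (x : ℕ → X) (hxC : ∀ n, x n ∈ C)
    (hrec : ∀ n, x (n + 1) = T (α n • Φ (x n) + (1 - α n) • x n))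
    (M : ℝ) (hM : ‖Φ (x 0) - x 0‖ ≤ M)
    (D : ℝ) (hD : 0 < D) (hDx : ∀ m n : ℕ, ‖x n - x m‖ ≤ D) :
    Tendsto (fun n => ‖x n - T (x n)‖) atTop (nhds 0) ∧
      ∀ e ∈ Set.Ioo (0 : ℝ) 2,
        ∀ n ≥ max
          (1 + θ (⌈1 / (1 - ρ)⌉₊ *
            (β (e / (4 * ((1 + ρ) * D + M))) + 2 + ⌈Real.log (4 * D / e)⌉₊)))
          (1 + φ (e / (2 * ((1 + ρ) * D + M)))),
        ‖x n - T (x n)‖ < e := by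
  obtain ⟨hρ0, hρ1⟩ := hρ
  set P := (1 + ρ) * D + M
  have hP : 0 < P := by have := (norm_nonneg _).trans hM; positivity
  have hαI (n : ℕ) : α n ∈ Set.Icc (0 : ℝ) 1 := Set.Ioo_subset_Icc_self (hα n)
  have hΦx (n : ℕ) : ‖Φ (x n) - x n‖ ≤ P :=
    (norm_sub_self_le_of_norm_sub_le (hΦc _ (hxC n) _ (hxC 0))).trans
      (add_le_add (mul_le_mul_of_nonneg_left (hDx 0 n) (by linarith)) hM)
  have hstep (n : ℕ) : ‖x (n + 1 + 1) - x (n + 1)‖ ≤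
      (1 - (1 - ρ) * α (n + 1)) * ‖x (n + 1) - x n‖ + |α (n + 1) - α n| * P := by
    have h := norm_map_combo_sub_map_combo_le hconv hΦ hTne hΦc (hxC (n + 1)) (hxC n)
      (hαI (n + 1)) (hαI n)
    rw [← hrec, ← hrec] at h
    exact h.trans (by gcongr; exact hΦx n)
  have hrate : ∀ e ∈ Set.Ioo (0 : ℝ) 2, ∀ n ≥ max
      (1 + θ (⌈1 / (1 - ρ)⌉₊ * (β (e / (4 * P)) + 2 + ⌈Real.log (4 * D / e)⌉₊)))
      (1 + φ (e / (2 * P))), ‖x n - T (x n)‖ < e := by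
    rintro e ⟨he, -⟩ n hn
    have hstep_small : ‖x (n + 1) - x n‖ < e / 2 :=
      lt_half_of_le_one_sub_mul_add_of_rates hρ0.le hρ1 (fun n => (hαI n).1) (fun n => (hαI n).2)
        hθ hβ hD hP he (fun n => hDx n (n + 1)) hstep (le_of_max_le_left hn)
    have hα_small : α n * P < e / 2 := by
      have := (le_abs_self _).trans_lt (hφ (e / (2 * P)) (by positivity) n (by omega))
      rw [lt_div_iff₀ (by positivity)] at this
      linarith
    have hTx : ‖x (n + 1) - T (x n)‖ ≤ α n * P := by
      rw [hrec]
      exact (norm_map_combo_sub_map_le hconv hΦ hTne (hxC n) (hαI n)).trans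
        (mul_le_mul_of_nonneg_left (hΦx n) (hαI n).1)
    calc ‖x n - T (x n)‖ ≤ ‖x (n + 1) - x n‖ + ‖x (n + 1) - T (x n)‖ := by
          rw [← norm_sub_rev (x n)]; exact norm_sub_le_norm_sub_add_norm_sub _ _ _
      _ < e / 2 + e / 2 := add_lt_add hstep_small (hTx.trans_lt hα_small)
      _ = e := add_halves e
  exact ⟨tendsto_nhds_zero_of_forall_lt (fun n => norm_nonneg _) two_pos
    fun e he => ⟨_, hrate e he⟩, hrate⟩

theorem stmt_12
    {X : Type*} [NormedAddCommGroup X] [NormedSpace ℝ X]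
    (C : Set X) (hC : C.Nonempty) (hconv : Convex ℝ C)
    (T Φ : X → X) (hT : ∀ x ∈ C, T x ∈ C) (hΦ : ∀ x ∈ C, Φ x ∈ C)
    (hTne : ∀ x ∈ C, ∀ y ∈ C, ‖T x - T y‖ ≤ ‖x - y‖)
    (ρ : ℝ) (hρ : ρ ∈ Set.Ioo (0 : ℝ) 1)
    (hΦc : ∀ x ∈ C, ∀ y ∈ C, ‖Φ x - Φ y‖ ≤ ρ * ‖x - y‖)
    (α : ℕ → ℝ) (hα : ∀ n, α n ∈ Set.Ioo (0 : ℝ) 1)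
    (φ : ℝ → ℕ) (hφ : ∀ e : ℝ, 0 < e → ∀ n ≥ φ e, |α n| < e)
    (θ : ℕ → ℕ) (hθ : ∀ n : ℕ, (n : ℝ) ≤ ∑ i ∈ Finset.range (θ n + 1), α i)
    (β : ℝ → ℕ)
    (hβ : ∀ e : ℝ, 0 < e → ∀ n : ℕ,
      abs ((∑ i ∈ Finset.range (β e + n + 1), |α (i + 1) - α i|) -
          ∑ i ∈ Finset.range (β e + 1), |α (i + 1) - α i|) < e)
    (x : ℕ → X) (hx0 : x 0 ∈ C) (hxC : ∀ n, x n ∈ C)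
    (hrec : ∀ n, x (n + 1) = T (α n • Φ (x n) + (1 - α n) • x n))
    (M : ℝ) (hM : ‖Φ (x 0) - x 0‖ ≤ M) (hM0 : 0 ≤ M)
    (D : ℝ) (hD : 0 < D) (hDx : ∀ m n : ℕ, ‖x n - x m‖ ≤ D) :
    Tendsto (fun n => ‖x n - T (x n)‖) atTop (nhds 0) ∧
      ∀ e ∈ Set.Ioo (0 : ℝ) 2,
        ∀ n ≥ max
          (1 + θ (⌈1 / (1 - ρ)⌉₊ *
            (β (e / (4 * ((1 + ρ) * D + M))) + 2 + ⌈Real.log (4 * D / e)⌉₊)))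
          (1 + φ (e / (2 * ((1 + ρ) * D + M)))),
        ‖x n - T (x n)‖ < e :=
  stmt_12_general C hconv T Φ hΦ hTne ρ hρ hΦc α hα φ hφ θ hθ β hβ x hxC hrec M hM D hD hDx
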